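/- Every element of Ξ vanishes at infinity, i.e., Ξ ⊆ C_∞(ℝⁿ). -/
import Mathlib


open MeasureTheory Filter ComplexConjugate

noncomputable section

/-- The embedding of the integer lattice `ℤⁿ` into `ℝⁿ`. -/
def latt {n : ℕ} (p : Fin n → ℤ) : Fin n → ℝ := fun i => (p i : ℝ)

/-- The periodization of the square modulus of `ξ`. -/
def perSum {n : ℕ} (ξ : (Fin n → ℝ) → ℂ) (x : Fin n → ℝ) : ℝ :=
  ∑' p : Fin n → ℤ, ‖ξ (x - latt p)‖ ^ 2

/-- Membership in the module `Ξ`: bounded continuous functions whose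
periodization of the square modulus is (summable,) uniformly bounded and continuous. -/
def InXi {n : ℕ} (ξ : (Fin n → ℝ) → ℂ) : Prop :=
  Continuous ξ ∧ (∃ M, ∀ x, ‖ξ x‖ ≤ M) ∧
  (∀ x, Summable fun p : Fin n → ℤ => ‖ξ (x - latt p)‖ ^ 2) ∧
  (∃ K, ∀ x, perSum ξ x ≤ K) ∧ Continuous (perSum ξ)

/-- The norm `‖ξ‖_A = sup_x (∑_{p∈ℤⁿ} |ξ(x-p)|²)^{1/2}`. -/
def normA {n : ℕ} (ξ : (Fin n → ℝ) → ℂ) : ℝ := Real.sqrt (⨆ x, perSum ξ x)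

/-- The `C(𝕋ⁿ)`-valued inner product `⟨ξ,η⟩_A(x) = ∑_{p∈ℤⁿ} conj(ξ(x-p)) η(x-p)`. -/
def innerA {n : ℕ} (ξ η : (Fin n → ℝ) → ℂ) (x : Fin n → ℝ) : ℂ :=
  ∑' p : Fin n → ℤ, conj (ξ (x - latt p)) * η (x - latt p)

/-- Every element of Ξ vanishes at infinity. -/
theorem stmt4 {n : ℕ} (ξ : (Fin n → ℝ) → ℂ) (hξ : InXi ξ) :
    Tendsto ξ (cocompact (Fin n → ℝ)) (nhds 0) := by
  obtain ⟨hcont, -, hsum, -, hper⟩ := hξ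
  rw [Metric.tendsto_nhds]
  intro ε hε
  rw [Filter.eventually_iff, mem_cocompact]
  set g : Finset (Fin n → ℤ) → (Fin n → ℝ) → ℝ :=
    fun F x => perSum ξ x - ∑ p ∈ F, ‖ξ (x - latt p)‖ ^ 2 with hg
  have hg_cont : ∀ F, Continuous (g F) := fun F =>
    hper.sub (continuous_finset_sum F fun p _ =>
      ((hcont.comp (continuous_id.sub continuous_const)).norm.pow 2))
  have hterm_nonneg : ∀ (z : Fin n → ℝ) (p : Fin n → ℤ), (0:ℝ) ≤ ‖ξ (z - latt p)‖ ^ 2 :=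
    fun z p => by positivity
  have hg_mono : ∀ (F F' : Finset (Fin n → ℤ)), F ⊆ F' → ∀ x, g F' x ≤ g F x := by
    intro F F' hFF x
    simp only [hg]
    have := Finset.sum_le_sum_of_subset_of_nonneg hFF (fun p _ _ => hterm_nonneg x p)
    linarith
  -- pointwise small tails on all points
  have hcov : ∀ y : Fin n → ℝ, ∃ F : Finset (Fin n → ℤ), g F y < ε ^ 2 := by
    intro y
    have h : HasSum (fun p : Fin n → ℤ => ‖ξ (y - latt p)‖ ^ 2) (perSum ξ y) :=
      (hsum y).hasSum
    have hlt : perSum ξ y - ε ^ 2 < perSum ξ y := by nlinarith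
    obtain ⟨F, hF⟩ := (h.eventually (eventually_gt_nhds hlt)).exists
    exact ⟨F, by simp only [hg]; linarith⟩
  -- cube
  set C : Set (Fin n → ℝ) := Set.Icc 0 1 with hC
  have hCcpt : IsCompact C := isCompact_Icc
  obtain ⟨t, ht⟩ := hCcpt.elim_finite_subcover
    (fun F : Finset (Fin n → ℤ) => {x | g F x < ε ^ 2})
    (fun F => isOpen_lt (hg_cont F) continuous_const)
    (by intro y _; obtain ⟨F, hF⟩ := hcov y; exact Set.mem_iUnion.2 ⟨F, hF⟩)
  set F : Finset (Fin n → ℤ) := t.sup id with hF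
  have hgF : ∀ y ∈ C, g F y < ε ^ 2 := by
    intro y hy
    obtain ⟨F', hF't, hyF'⟩ := Set.mem_iUnion₂.1 (ht hy)
    exact lt_of_le_of_lt (hg_mono F' F (Finset.le_sup (f := id) hF't) y) hyF'
  -- bound for lattice points in F
  obtain ⟨R, hR⟩ := (F.image fun q => ‖latt q‖).exists_le
  refine ⟨Metric.closedBall 0 (R + 1), isCompact_closedBall 0 _, ?_⟩
  intro x hx
  simp only [Set.mem_compl_iff, Metric.mem_closedBall, dist_zero_right, not_le] at hx
  set p : Fin n → ℤ := fun i => ⌊x i⌋ with hp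
  set y : Fin n → ℝ := x - latt p with hy
  have hyx : y + latt p = x := sub_add_cancel x (latt p)
  have hyC : y ∈ C := by
    rw [hC, Set.mem_Icc]
    constructor <;> intro i
    · exact sub_nonneg.2 (Int.floor_le (x i))
    · have := Int.sub_one_lt_floor (x i)
      show x i - (↑⌊x i⌋ : ℝ) ≤ 1
      linarith
  have hynorm : ‖y‖ ≤ 1 := by
    rw [pi_norm_le_iff_of_nonneg zero_le_one]
    intro i
    have hyi : y i = x i - (⌊x i⌋ : ℝ) := rfl
    rw [Real.norm_eq_abs, abs_le, hyi]
    have h1 := Int.floor_le (x i)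
    have h2 := Int.sub_one_lt_floor (x i)
    constructor <;> linarith
  have hlatt_neg : latt (-p) = -(latt p) := by
    funext i; simp [latt]
  have hpnorm : R < ‖latt p‖ := by
    have : ‖latt p‖ = ‖x - y‖ := by rw [← hyx]; congr 1; abel
    have h2 : ‖x - y‖ ≥ ‖x‖ - ‖y‖ := norm_sub_norm_le x y
    linarith
  have hnpF : -p ∉ F := by
    intro hmem
    have := hR ‖latt (-p)‖ (Finset.mem_image_of_mem _ hmem)
    rw [hlatt_neg, norm_neg] at this
    linarith
  have hkey : ‖ξ x‖ ^ 2 ≤ g F y := by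
    have hsumle : ∑ q ∈ insert (-p) F, ‖ξ (y - latt q)‖ ^ 2 ≤ perSum ξ y :=
      Summable.sum_le_tsum _ (fun q _ => hterm_nonneg y q) (hsum y)
    rw [Finset.sum_insert hnpF] at hsumle
    have hx' : y - latt (-p) = x := by rw [hlatt_neg, sub_neg_eq_add, hyx]
    rw [hx'] at hsumle
    simp only [hg]
    linarith
  have : ‖ξ x‖ ^ 2 < ε ^ 2 := lt_of_le_of_lt hkey (hgF y hyC)
  have hxlt : ‖ξ x‖ < ε := lt_of_pow_lt_pow_left₀ 2 hε.le this
  simpa [dist_eq_norm] using hxlt
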